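/- arXiv:2011.12552 — 3 statements merged into one kernel-verified Lean document; each statement's English description precedes it below -/
import Mathlib

section
/- The function f(t) = t * (exp(d/(W t)) - 1) / h is convex in t on (0, ∞), for any fixed d ≥ 0, W > 0, h > 0. -/
theorem stmt_2 (W h d : ℝ) (hW : 0 < W) (hh : 0 < h) (hd : 0 ≤ d) :
    ConvexOn ℝ (Set.Ioi 0) (fun t : ℝ => t * (Real.exp (d / (W * t)) - 1) / h) := by
  have hfun : (fun t : ℝ => t * (Real.exp (d / (W * t)) - 1) / h)
      = fun t : ℝ => t * (Real.exp ((d * W⁻¹) * t⁻¹) - 1) * h⁻¹ := by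
    funext t
    rw [div_eq_mul_inv, div_eq_mul_inv, mul_inv, mul_assoc, mul_assoc, mul_assoc d W⁻¹ t⁻¹]
  rw [hfun]
  set c : ℝ := d * W⁻¹ with hc
  have hc0 : 0 ≤ c := mul_nonneg hd (inv_nonneg.mpr hW.le)
  have key : ∀ x ∈ Set.Ioi (0:ℝ),
      HasDerivAt (fun t : ℝ => t * (Real.exp (c * t⁻¹) - 1) * h⁻¹)
        ((Real.exp (c * x⁻¹) * (1 - c * x⁻¹) - 1) * h⁻¹) x := by
    intro x hx
    have hx0 : x ≠ 0 := ne_of_gt hx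
    have h1 : HasDerivAt (fun t : ℝ => c * t⁻¹) (c * (-(x ^ 2)⁻¹)) x :=
      (hasDerivAt_inv hx0).const_mul c
    have h2 := h1.exp
    have h4 := ((hasDerivAt_id x).mul (h2.sub_const 1)).mul_const h⁻¹
    convert h4 using 1
    · rfl
    · rfl
    · rfl
    simp only [id]
    field_simp
    ring
  have key2 : ∀ x ∈ Set.Ioi (0:ℝ),
      HasDerivAt (fun x : ℝ => (Real.exp (c * x⁻¹) * (1 - c * x⁻¹) - 1) * h⁻¹)
        (Real.exp (c * x⁻¹) * (c ^ 2 * (x ^ 3)⁻¹) * h⁻¹) x := by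
    intro x hx
    have hx0 : x ≠ 0 := ne_of_gt hx
    have h1 : HasDerivAt (fun t : ℝ => c * t⁻¹) (c * (-(x ^ 2)⁻¹)) x :=
      (hasDerivAt_inv hx0).const_mul c
    have h2 := h1.exp
    have h5 := ((h2.mul (h1.const_sub 1)).sub_const 1).mul_const h⁻¹
    convert h5 using 1
    · rfl
    · rfl
    · rfl
    field_simp
    ring
  apply convexOn_of_hasDerivWithinAt2_nonneg (convex_Ioi 0)
    (f' := fun x => (Real.exp (c * x⁻¹) * (1 - c * x⁻¹) - 1) * h⁻¹)
    (f'' := fun x => Real.exp (c * x⁻¹) * (c ^ 2 * (x ^ 3)⁻¹) * h⁻¹)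
  · exact fun x hx => (key x hx).continuousAt.continuousWithinAt
  · intro x hx
    rw [interior_Ioi] at hx ⊢
    exact (key x hx).hasDerivWithinAt
  · intro x hx
    rw [interior_Ioi] at hx ⊢
    exact (key2 x hx).hasDerivWithinAt
  · intro x hx
    rw [interior_Ioi] at hx
    have hx' : 0 < x := hx
    positivity
end

section
/- Consider the problem of minimizing Σ_{i=1}^{n} k₀ l_i f_i² subject to Σ_{i=1}^{n} l_i / f_i ≤ D and 0 < f_i ≤ f_max for all i, where l_i > 0, k₀ > 0, and D ≥ Σ_{i=1}^{n} l_i / f_max. The optimal solution is f_i = (Σ_{j=1}^{n} l_j) / D for every i, and the optimal value is k₀ (Σ_{i=1}^{n} l_i)³ / D². -/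
theorem stmt_4 (n : ℕ) (hn : 0 < n) (l : Fin n → ℝ) (hl : ∀ i, 0 < l i)
    (k₀ fmax D : ℝ) (hk : 0 < k₀) (hfmax : 0 < fmax)
    (hD : ∑ i, l i / fmax ≤ D) :
    ((0 < (∑ i, l i) / D ∧ (∑ i, l i) / D ≤ fmax) ∧
      (∑ i, l i / ((∑ j, l j) / D)) ≤ D ∧
      (∑ i, k₀ * l i * ((∑ j, l j) / D) ^ 2) = k₀ * (∑ i, l i) ^ 3 / D ^ 2) ∧
    (∀ f : Fin n → ℝ, (∀ i, 0 < f i ∧ f i ≤ fmax) → (∑ i, l i / f i) ≤ D →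
      k₀ * (∑ i, l i) ^ 3 / D ^ 2 ≤ ∑ i, k₀ * l i * (f i) ^ 2) := by
  have hne : (Finset.univ : Finset (Fin n)).Nonempty := Finset.univ_nonempty_iff.mpr ⟨⟨0, hn⟩⟩
  have hL : 0 < ∑ i, l i := Finset.sum_pos (fun i _ => hl i) hne
  have hD0 : 0 < D :=
    lt_of_lt_of_le (Finset.sum_pos (fun i _ => div_pos (hl i) hfmax) hne) hD
  set L := ∑ i, l i with hLdef
  have hLD : L / fmax ≤ D := by simpa [hLdef, Finset.sum_div] using hD
  have ha : 0 < L / D := div_pos hL hD0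
  have haf : L / D ≤ fmax := by
    rw [div_le_iff₀ hD0]
    rw [div_le_iff₀ hfmax] at hLD
    linarith [hLD]
  set a := L / D with hadef
  refine ⟨⟨⟨ha, haf⟩, ?_, ?_⟩, ?_⟩
  · rw [← Finset.sum_div, ← hLdef, hadef]
    rw [div_div_eq_mul_div, mul_comm, mul_div_assoc, div_self hL.ne', mul_one]
  · rw [← Finset.sum_mul, ← Finset.mul_sum, ← hLdef, hadef]
    field_simp
  · intro f hf hsum
    have key : ∀ i ∈ Finset.univ,
        3*k₀*a^2*l i - 2*k₀*a^3*(l i / f i) ≤ k₀ * l i * (f i) ^ 2 := by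
      intro i _
      obtain ⟨hfi, _⟩ := hf i
      rw [← mul_le_mul_iff_of_pos_right hfi]
      have e : 2*k₀*a^3*(l i / f i) * f i = 2*k₀*a^3*l i := by
        field_simp
      have h1 : 3*a^2*(f i) ≤ (f i)^3 + 2*a^3 := by
        nlinarith [sq_nonneg (f i - a), mul_pos hfi ha, ha]
      have hkl : 0 < k₀ * l i := mul_pos hk (hl i)
      nlinarith [mul_le_mul_of_nonneg_left h1 hkl.le, e]
    have hsum2 := Finset.sum_le_sum key
    have hS : ∑ i, (3*k₀*a^2*l i - 2*k₀*a^3*(l i / f i))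
        = 3*k₀*a^2*L - 2*k₀*a^3*(∑ i, l i / f i) := by
      rw [Finset.sum_sub_distrib, ← Finset.mul_sum, ← Finset.mul_sum, hLdef]
    rw [hS] at hsum2
    have ha3 : 0 < 2*k₀*a^3 := by positivity
    have hbound : 3*k₀*a^2*L - 2*k₀*a^3*D ≤ 3*k₀*a^2*L - 2*k₀*a^3*(∑ i, l i / f i) := by
      nlinarith [mul_le_mul_of_nonneg_left hsum ha3.le]
    have heq : k₀ * L ^ 3 / D ^ 2 = 3*k₀*a^2*L - 2*k₀*a^3*D := by
      rw [hadef]; field_simp; ring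
    calc k₀ * L ^ 3 / D ^ 2 = 3*k₀*a^2*L - 2*k₀*a^3*D := heq
      _ ≤ 3*k₀*a^2*L - 2*k₀*a^3*(∑ i, l i / f i) := hbound
      _ ≤ ∑ i, k₀ * l i * (f i) ^ 2 := hsum2
end

section
/- Consider minimizing F(τ_t) = τ_t (exp(d/(W τ_t)) - 1)/h + k₀ L³ / (A - τ_t)² over τ_t ∈ (0, A - L/f_max], where d, W, h, k₀, L > 0 and A > L/f_max > 0. Then F is convex on this interval, hence has a unique minimizer there. -/
theorem stmt_16 (d W h k₀ L fmax A : ℝ) (hd : 0 < d) (hW : 0 < W) (hh : 0 < h)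
    (hk : 0 < k₀) (hL : 0 < L) (hfmax : 0 < fmax) (hA : L / fmax < A) :
    ConvexOn ℝ (Set.Ioc 0 (A - L / fmax))
      (fun τt : ℝ => τt * (Real.exp (d / (W * τt)) - 1) / h + k₀ * L ^ 3 / (A - τt) ^ 2) ∧
    ∃! x : ℝ, x ∈ Set.Ioc (0 : ℝ) (A - L / fmax) ∧
      ∀ y ∈ Set.Ioc (0 : ℝ) (A - L / fmax),
        x * (Real.exp (d / (W * x)) - 1) / h + k₀ * L ^ 3 / (A - x) ^ 2 ≤
          y * (Real.exp (d / (W * y)) - 1) / h + k₀ * L ^ 3 / (A - y) ^ 2 := by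
  have hLf : 0 < L / fmax := div_pos hL hfmax
  set B := A - L / fmax with hBdef
  set f : ℝ → ℝ := fun τt : ℝ =>
      τt * (Real.exp (d / (W * τt)) - 1) / h + k₀ * L ^ 3 / (A - τt) ^ 2 with hfdef
  have hB : 0 < B := by rw [hBdef]; linarith
  have hBA : B < A := by rw [hBdef]; linarith
  have hABpos : 0 < A - B := by rw [hBdef]; linarith
  have hhne : h ≠ 0 := ne_of_gt hh
  -- first derivative
  have hasf : ∀ x ∈ Set.Ioo (0:ℝ) A, HasDerivAt f
      ((Real.exp (d/(W*x)) - 1 - d/(W*x) * Real.exp (d/(W*x))) / h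
        + 2*k₀*L^3/(A-x)^3) x := by
    intro x hx
    have hx0 := hx.1
    have hxA : 0 < A - x := sub_pos.2 hx.2
    have hxne : x ≠ 0 := ne_of_gt hx0
    have hAx : A - x ≠ 0 := ne_of_gt hxA
    have hWx : W * x ≠ 0 := mul_ne_zero (ne_of_gt hW) hxne
    have h1 : HasDerivAt (fun y : ℝ => W * y) W x := by
      simpa using (hasDerivAt_id x).const_mul W
    have hu := (hasDerivAt_const x d).div h1 hWx
    have he := hu.exp
    have ht1 := ((hasDerivAt_id x).mul (he.sub_const 1)).div_const h
    have hs : HasDerivAt (fun y : ℝ => A - y) (-1) x := by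
      simpa using (hasDerivAt_id x).const_sub A
    have ht2 := (hasDerivAt_const x (k₀*L^3)).div (hs.pow 2) (pow_ne_zero 2 hAx)
    have hsum := ht1.add ht2
    rw [hfdef]
    refine hsum.congr_deriv ?_
    simp only [Pi.div_apply, Pi.pow_apply, id]
    field_simp
    ring
  -- second derivative
  have hasf' : ∀ x ∈ Set.Ioo (0:ℝ) A, HasDerivAt
      (fun x => (Real.exp (d/(W*x)) - 1 - d/(W*x) * Real.exp (d/(W*x))) / h
        + 2*k₀*L^3/(A-x)^3)
      (Real.exp (d/(W*x)) * d^2 / (W^2*x^3) / h + 6*k₀*L^3/(A-x)^4) x := by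
    intro x hx
    have hx0 := hx.1
    have hxA : 0 < A - x := sub_pos.2 hx.2
    have hxne : x ≠ 0 := ne_of_gt hx0
    have hAx : A - x ≠ 0 := ne_of_gt hxA
    have hWx : W * x ≠ 0 := mul_ne_zero (ne_of_gt hW) hxne
    have h1 : HasDerivAt (fun y : ℝ => W * y) W x := by
      simpa using (hasDerivAt_id x).const_mul W
    have hu := (hasDerivAt_const x d).div h1 hWx
    have he := hu.exp
    have ht1 := ((he.sub_const 1).sub (hu.mul he)).div_const h
    have hs : HasDerivAt (fun y : ℝ => A - y) (-1) x := by
      simpa using (hasDerivAt_id x).const_sub A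
    have ht2 := (hasDerivAt_const x (2*k₀*L^3)).div (hs.pow 3) (pow_ne_zero 3 hAx)
    have hsum := ht1.add ht2
    refine hsum.congr_deriv ?_
    simp only [Pi.div_apply, Pi.pow_apply, id]
    field_simp
    ring
  have hIoc : Set.Ioc (0:ℝ) B ⊆ Set.Ioo 0 A := fun y hy => ⟨hy.1, lt_of_le_of_lt hy.2 hBA⟩
  have hcont : ContinuousOn f (Set.Ioc 0 B) := fun y hy =>
    ((hasf y (hIoc hy)).differentiableAt.continuousAt).continuousWithinAt
  have hstrict : StrictConvexOn ℝ (Set.Ioc 0 B) f := by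
    apply strictConvexOn_of_deriv2_pos (convex_Ioc 0 B) hcont
    intro x hx
    rw [interior_Ioc] at hx
    have hxU : x ∈ Set.Ioo 0 A := ⟨hx.1, lt_trans hx.2 hBA⟩
    have hx0 := hx.1
    have hxA : 0 < A - x := sub_pos.2 hxU.2
    have h2 : deriv^[2] f x
        = Real.exp (d/(W*x)) * d^2 / (W^2*x^3) / h + 6*k₀*L^3/(A-x)^4 := by
      have hev : deriv f =ᶠ[nhds x] (fun x =>
          (Real.exp (d/(W*x)) - 1 - d/(W*x) * Real.exp (d/(W*x))) / h
            + 2*k₀*L^3/(A-x)^3) := by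
        filter_upwards [isOpen_Ioo.mem_nhds hxU] with y hy
        exact (hasf y hy).deriv
      show deriv (deriv f) x = _
      rw [hev.deriv_eq, (hasf' x hxU).deriv]
    rw [h2]
    have t1 : 0 < Real.exp (d/(W*x)) * d^2 / (W^2*x^3) / h :=
      div_pos (div_pos (mul_pos (Real.exp_pos _) (pow_pos hd 2))
        (mul_pos (pow_pos hW 2) (pow_pos hx0 3))) hh
    have t2 : 0 < 6*k₀*L^3/(A-x)^4 :=
      div_pos (mul_pos (mul_pos (by norm_num : (0:ℝ) < 6) hk) (pow_pos hL 3)) (pow_pos hxA 4)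
    linarith
  refine ⟨hstrict.convexOn, ?_⟩
  -- existence of the minimizer
  have hfB : 0 ≤ f B := by
    have hexp1 : (1:ℝ) ≤ Real.exp (d/(W*B)) := by
      have h0 : 0 ≤ d/(W*B) := le_of_lt (div_pos hd (mul_pos hW hB))
      linarith [Real.add_one_le_exp (d/(W*B))]
    have h1 : (0:ℝ) ≤ B * (Real.exp (d/(W*B)) - 1) / h :=
      div_nonneg (mul_nonneg hB.le (by linarith)) hh.le
    have h2 : (0:ℝ) ≤ k₀*L^3/(A-B)^2 :=
      le_of_lt (div_pos (mul_pos hk (pow_pos hL 3)) (pow_pos hABpos 2))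
    have hfBeq : f B = B * (Real.exp (d/(W*B)) - 1) / h + k₀*L^3/(A-B)^2 := by
      simp only [hfdef]
    rw [hfBeq]; linarith
  have hden : (0:ℝ) < 4*W^2*h*(f B + 1) :=
    mul_pos (mul_pos (mul_pos (by norm_num) (pow_pos hW 2)) hh) (by linarith)
  set C := d^2/(4*W^2*h*(f B + 1)) with hCdef
  have hC : 0 < C := div_pos (pow_pos hd 2) hden
  set ε := min B C with hεdef
  have hε : 0 < ε := lt_min hB hC
  have hεB : ε ≤ B := min_le_left _ _
  have hεC : ε ≤ C := min_le_right _ _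
  -- key coercivity bound near 0
  have key : ∀ x, x ∈ Set.Ioc (0:ℝ) B → x < C → f B < f x := by
    intro x hx hxC
    have hx0 := hx.1
    have hxA : 0 < A - x := by
      have : A - B ≤ A - x := by linarith [hx.2]
      linarith
    have hupos : 0 < d/(W*x) := div_pos hd (mul_pos hW hx0)
    have hexp : (d/(W*x))^2/4 ≤ Real.exp (d/(W*x)) - 1 := by
      have h2 := Real.add_one_le_exp (d/(W*x)/2)
      have h3 : Real.exp (d/(W*x)/2) * Real.exp (d/(W*x)/2) = Real.exp (d/(W*x)) := by
        rw [← Real.exp_add]; ring_nf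
      nlinarith [Real.exp_pos (d/(W*x)/2)]
    have hfx : f x = x * (Real.exp (d/(W*x)) - 1) / h + k₀*L^3/(A-x)^2 := by
      simp only [hfdef]
    have hT2 : 0 ≤ k₀*L^3/(A-x)^2 :=
      le_of_lt (div_pos (mul_pos hk (pow_pos hL 3)) (pow_pos hxA 2))
    have h5 : x * ((d/(W*x))^2/4) / h ≤ x * (Real.exp (d/(W*x)) - 1) / h := by
      exact div_le_div_of_nonneg_right (mul_le_mul_of_nonneg_left hexp hx0.le) hh.le
    have h6 : x * ((d/(W*x))^2/4) / h = d^2/(4*W^2*x*h) := by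
      field_simp
    have h7 : f B + 1 ≤ d^2/(4*W^2*x*h) := by
      rw [le_div_iff₀ (mul_pos (mul_pos (mul_pos (by norm_num : (0:ℝ)<4) (pow_pos hW 2)) hx0) hh)]
      have hCd : C * (4*W^2*h*(f B + 1)) = d^2 := by
        rw [hCdef, div_mul_cancel₀ _ (ne_of_gt hden)]
      nlinarith [mul_lt_mul_of_pos_right hxC hden]
    rw [hfx]
    rw [h6] at h5
    linarith
  -- minimum on the compact interval [ε, B]
  have hsub : Set.Icc ε B ⊆ Set.Ioc 0 B := fun y hy => ⟨lt_of_lt_of_le hε hy.1, hy.2⟩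
  obtain ⟨x₀, hx₀mem, hx₀min⟩ := isCompact_Icc.exists_isMinOn ⟨B, hεB, le_refl B⟩
    (hcont.mono hsub)
  have hx₀S : x₀ ∈ Set.Ioc (0:ℝ) B := hsub hx₀mem
  have hglob : ∀ y ∈ Set.Ioc (0:ℝ) B, f x₀ ≤ f y := by
    intro y hy
    by_cases hyε : ε ≤ y
    · exact isMinOn_iff.1 hx₀min y ⟨hyε, hy.2⟩
    · push_neg at hyε
      have hyC : y < C := lt_of_lt_of_le hyε hεC
      have h1 := key y hy hyC
      have h2 : f x₀ ≤ f B := isMinOn_iff.1 hx₀min B ⟨hεB, le_refl B⟩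
      linarith
  have main : ∃! x : ℝ, x ∈ Set.Ioc (0:ℝ) B ∧ ∀ y ∈ Set.Ioc (0:ℝ) B, f x ≤ f y := by
    refine ⟨x₀, ⟨hx₀S, hglob⟩, ?_⟩
    rintro y ⟨hyS, hymin⟩
    exact hstrict.eq_of_isMinOn (isMinOn_iff.2 hymin) (isMinOn_iff.2 hglob) hyS hx₀S
  simpa only [hfdef] using main
end
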